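/- arXiv:2509.15191 — 8 statements merged into one kernel-verified Lean document; each statement's English description precedes it below -/
import Mathlib

section
/- Let M be a structure with operations S : M → M, + : M × M → M, × : M × M → M and a distinguished subset N ⊆ M (the standard part), satisfying: (a) the axioms of Robinson's Q (S injective with nonzero values on appropriate elements, x + 0 = x, x + S y = S(x + y), x × 0 = 0, x × S y = (x × y) + x); (b) the restriction of + to (M ∖ N)² is injective into M ∖ N; (c) for every {+}-term t(x₀,…,xₗ) which is not a variable, and all tuples w⃗ from M ∖ N, t(w⃗) ≠ wᵢ for each i; (d) m + w = w + m for every standard m ∈ N and nonstandard w ∈ M ∖ N. Then for all x, y, z, w ∈ M, if (x + y)·(x + y) + x = (z + w)·(z + w) + z then x = z and y = w. -/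
/-- Terms in the language {+}. -/
inductive AddTerm : Type
  | var : ℕ → AddTerm
  | add : AddTerm → AddTerm → AddTerm

/-- Evaluation of a {+}-term with respect to a binary operation and an assignment. -/
def AddTerm.eval {M : Type} (f : M → M → M) (ρ : ℕ → M) : AddTerm → M
  | .var n => ρ n
  | .add t s => f (t.eval f ρ) (s.eval f ρ)

/-- The variable i occurs in the term. -/
def AddTerm.Occurs (i : ℕ) : AddTerm → Prop
  | .var n => i = n
  | .add t s => t.Occurs i ∨ s.Occurs i


/-!
If `x` or `y` is nonstandard, then `u = x + y` is nonstandard and has a nonstandard predecessor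
`t`; the recursion `u * S b = u * b + u` displays `u` as the right summand of a sum of two
nonstandard elements. Since `+` is injective on nonstandard pairs, the value of the pairing
therefore determines `u`, and cancelling `u * u` and then `x` gives `x = z` and `y = w`.
Acyclicity of `+` excludes the degenerate coincidences, such as `u * t = v * v` (it would give
`u * t = u * t + u`) or a nonstandard cycle `S^[k+1] t = t` (it would give
`u * t + u + ⋯ + u = u * t`). If `x` and `y` are both standard, the pairing is the injective map
`(a, b) ↦ (a + b)² + a` on `ℕ`.
-/

open Function

section

variable {M : Type}

def standardPart (zero : M) (S : M → M) : Set M := {x | ∃ n : ℕ, x = S^[n] zero}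

def pairing (add mul : M → M → M) (x y : M) : M := add (mul (add x y) (add x y)) x

structure RobinsonQ (zero : M) (S : M → M) (add mul : M → M → M) : Prop where
  succ_injective : Injective S
  succ_ne_zero : ∀ x, S x ≠ zero
  eq_zero_or_eq_succ : ∀ x, x = zero ∨ ∃ y, x = S y
  add_zero : ∀ x, add x zero = x
  add_succ : ∀ x y, add x (S y) = S (add x y)
  mul_zero : ∀ x, mul x zero = zero
  mul_succ : ∀ x y, mul x (S y) = add (mul x y) x

structure TreeLike (zero : M) (S : M → M) (add : M → M → M) : Prop where
  add_notMem : ∀ a b, a ∉ standardPart zero S → b ∉ standardPart zero S →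
    add a b ∉ standardPart zero S
  add_inj : ∀ a b c d, a ∉ standardPart zero S → b ∉ standardPart zero S →
    c ∉ standardPart zero S → d ∉ standardPart zero S → add a b = add c d → a = c ∧ b = d
  acyclic : ∀ t : AddTerm, (∀ n, t ≠ .var n) → ∀ ρ : ℕ → M, (∀ n, ρ n ∉ standardPart zero S) →
    ∀ i, t.Occurs i → t.eval add ρ ≠ ρ i
  add_comm_of_mem : ∀ m w, m ∈ standardPart zero S → w ∉ standardPart zero S →
    add m w = add w m

theorem pairing_nat_inj {a b c d : ℕ}
    (h : pairing (· + ·) (· * ·) a b = pairing (· + ·) (· * ·) c d) : a = c ∧ b = d := by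
  simp only [pairing] at h
  have hsum : a + b = c + d := by
    rcases lt_trichotomy (a + b) (c + d) with hlt | heq | hgt
    · nlinarith [Nat.mul_le_mul hlt hlt]
    · exact heq
    · nlinarith [Nat.mul_le_mul hgt hgt]
  rw [hsum] at h
  omega

theorem Function.Injective.iterate_apply_injective {α : Type*} {f : α → α} (hf : Injective f)
    {x : α} (hx : ∀ k, f^[k + 1] x ≠ x) : Injective fun n => f^[n] x := by
  have key : ∀ m k, f^[m + k] x = f^[m] x → k = 0 := by
    intro m k h
    rw [iterate_add_apply] at h
    cases k with
    | zero => rfl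
    | succ k => exact absurd (hf.iterate m h) (hx k)
  intro m n h
  rcases le_total m n with hmn | hnm
  · obtain ⟨k, rfl⟩ := Nat.exists_eq_add_of_le hmn
    simp [key m k h.symm]
  · obtain ⟨k, rfl⟩ := Nat.exists_eq_add_of_le hnm
    simp [key n k h]

theorem iterate_mem_standardPart {zero : M} {S : M → M} (n : ℕ) :
    S^[n] zero ∈ standardPart zero S :=
  ⟨n, rfl⟩

namespace RobinsonQ

variable {zero : M} {S : M → M} {add mul : M → M → M}

theorem succ_notMem (hQ : RobinsonQ zero S add mul) {e : M} (he : e ∉ standardPart zero S) :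
    S e ∉ standardPart zero S := by
  rintro ⟨n, hn⟩
  cases n with
  | zero => exact hQ.succ_ne_zero e hn
  | succ n => exact he ⟨n, hQ.succ_injective (by rwa [← iterate_succ_apply' S n zero])⟩

theorem iterate_notMem (hQ : RobinsonQ zero S add mul) {e : M} (he : e ∉ standardPart zero S)
    (k : ℕ) : S^[k] e ∉ standardPart zero S :=
  Iterate.rec (· ∉ standardPart zero S) he (fun _ => hQ.succ_notMem) k

theorem exists_eq_succ_notMem (hQ : RobinsonQ zero S add mul) {e : M}
    (he : e ∉ standardPart zero S) : ∃ t, e = S t ∧ t ∉ standardPart zero S := by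
  obtain rfl | ⟨t, rfl⟩ := hQ.eq_zero_or_eq_succ e
  · exact absurd (iterate_mem_standardPart 0) he
  · exact ⟨t, rfl, fun ⟨n, hn⟩ => he ⟨n + 1, by rw [hn, iterate_succ_apply']⟩⟩

theorem add_iterate (hQ : RobinsonQ zero S add mul) (e f : M) (n : ℕ) :
    add e (S^[n] f) = S^[n] (add e f) :=
  Semiconj.iterate_right (f := add e) (hQ.add_succ e) n f

theorem add_numeral (hQ : RobinsonQ zero S add mul) (e : M) (n : ℕ) :
    add e (S^[n] zero) = S^[n] e := by
  rw [hQ.add_iterate, hQ.add_zero]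

theorem mul_iterate (hQ : RobinsonQ zero S add mul) (e f : M) (n : ℕ) :
    mul e (S^[n] f) = (add · e)^[n] (mul e f) :=
  Semiconj.iterate_right (f := mul e) (gb := (add · e)) (hQ.mul_succ e) n f

theorem mul_numeral (hQ : RobinsonQ zero S add mul) (m n : ℕ) :
    mul (S^[m] zero) (S^[n] zero) = S^[m * n] zero := by
  induction n with
  | zero => exact hQ.mul_zero _
  | succ n ih =>
    rw [iterate_succ_apply', hQ.mul_succ, ih, hQ.add_numeral, ← iterate_add_apply, Nat.mul_succ,
      Nat.add_comm]

theorem numeral_injective (hQ : RobinsonQ zero S add mul) : Injective fun n => S^[n] zero :=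
  hQ.succ_injective.iterate_apply_injective fun k h =>
    hQ.succ_ne_zero _ (by rwa [iterate_succ_apply'] at h)

theorem pairing_numeral (hQ : RobinsonQ zero S add mul) (a b : ℕ) :
    pairing add mul (S^[a] zero) (S^[b] zero) = S^[pairing (· + ·) (· * ·) a b] zero := by
  have hab : add (S^[a] zero) (S^[b] zero) = S^[a + b] zero := by
    rw [hQ.add_numeral, ← iterate_add_apply, Nat.add_comm]
  rw [pairing, hab, hQ.mul_numeral, hQ.add_numeral, ← iterate_add_apply, Nat.add_comm]
  rfl

theorem pairing_inj_of_mem (hQ : RobinsonQ zero S add mul) {x y z w : M}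
    (hx : x ∈ standardPart zero S) (hy : y ∈ standardPart zero S)
    (hz : z ∈ standardPart zero S) (hw : w ∈ standardPart zero S)
    (h : pairing add mul x y = pairing add mul z w) : x = z ∧ y = w := by
  obtain ⟨a, rfl⟩ := hx
  obtain ⟨b, rfl⟩ := hy
  obtain ⟨c, rfl⟩ := hz
  obtain ⟨d, rfl⟩ := hw
  rw [hQ.pairing_numeral, hQ.pairing_numeral] at h
  obtain ⟨rfl, rfl⟩ := pairing_nat_inj (hQ.numeral_injective h)
  exact ⟨rfl, rfl⟩

theorem pairing_numeral_left (hQ : RobinsonQ zero S add mul) {y t : M} (a : ℕ)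
    (ht : add (S^[a] zero) y = S t) :
    pairing add mul (S^[a] zero) y = add (mul (S t) t) (S^[a] (S t)) := by
  rw [pairing, ht, hQ.mul_succ, hQ.add_numeral, ← hQ.add_iterate]

theorem exists_add_eq_of_add_eq_iterate (hQ : RobinsonQ zero S add mul) {f g e : M}
    (hg : g ∉ standardPart zero S) (m : ℕ) (h : add f g = S^[m] e) :
    ∃ g₀ ∉ standardPart zero S, add f g₀ = e := by
  induction m generalizing g with
  | zero => exact ⟨g, hg, h⟩
  | succ m ih =>
    obtain ⟨g', rfl, hg'⟩ := hQ.exists_eq_succ_notMem hg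
    rw [hQ.add_succ, iterate_succ_apply'] at h
    exact ih hg' (hQ.succ_injective h)

end RobinsonQ

namespace TreeLike

variable {zero : M} {S : M → M} {add mul : M → M → M}

theorem numeral_add (hT : TreeLike zero S add) (hQ : RobinsonQ zero S add mul) {e : M}
    (he : e ∉ standardPart zero S) (n : ℕ) : add (S^[n] zero) e = S^[n] e := by
  rw [hT.add_comm_of_mem _ _ (iterate_mem_standardPart n) he, hQ.add_numeral]

theorem add_mem_iff (hT : TreeLike zero S add) (hQ : RobinsonQ zero S add mul) {x y : M} :
    add x y ∈ standardPart zero S ↔ x ∈ standardPart zero S ∧ y ∈ standardPart zero S := by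
  refine ⟨fun h => ?_, fun ⟨⟨a, ha⟩, ⟨b, hb⟩⟩ => ?_⟩
  · by_cases hx : x ∈ standardPart zero S
    · obtain ⟨a, rfl⟩ := hx
      refine ⟨iterate_mem_standardPart a, by_contra fun hy => ?_⟩
      rw [hT.numeral_add hQ hy] at h
      exact hQ.iterate_notMem hy a h
    · by_cases hy : y ∈ standardPart zero S
      · obtain ⟨b, rfl⟩ := hy
        rw [hQ.add_numeral] at h
        exact absurd h (hQ.iterate_notMem hx b)
      · exact absurd h (hT.add_notMem x y hx hy)
  · rw [ha, hb, hQ.add_numeral, ← iterate_add_apply]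
    exact iterate_mem_standardPart _

theorem mul_notMem (hT : TreeLike zero S add) (hQ : RobinsonQ zero S add mul) {a b : M}
    (ha : a ∉ standardPart zero S) (hb : b ∉ standardPart zero S) :
    mul a b ∉ standardPart zero S := by
  obtain ⟨b', rfl, -⟩ := hQ.exists_eq_succ_notMem hb
  rw [hQ.mul_succ, hT.add_mem_iff hQ]
  exact fun h => ha h.2

theorem pairing_mem_iff (hT : TreeLike zero S add) (hQ : RobinsonQ zero S add mul) {x y : M} :
    pairing add mul x y ∈ standardPart zero S ↔
      x ∈ standardPart zero S ∧ y ∈ standardPart zero S := by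
  have hmul : ∀ u, mul u u ∈ standardPart zero S ↔ u ∈ standardPart zero S := fun u =>
    ⟨fun h => by_contra fun hu => hT.mul_notMem hQ hu hu h, fun ⟨n, hn⟩ =>
      hn ▸ hQ.mul_numeral n n ▸ iterate_mem_standardPart _⟩
  rw [pairing, hT.add_mem_iff hQ, hmul, hT.add_mem_iff hQ]
  tauto

theorem iterate_add_right_ne_self (hT : TreeLike zero S add) {A u : M}
    (hA : A ∉ standardPart zero S) (hu : u ∉ standardPart zero S) (k : ℕ) :
    (add · u)^[k + 1] A ≠ A := by
  let t : AddTerm := (AddTerm.add · (.var 1))^[k + 1] (.var 0)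
  let ρ : ℕ → M := fun i => if i = 0 then A else u
  have ht_eval : t.eval add ρ = (add · u)^[k + 1] A :=
    Semiconj.iterate_right (f := AddTerm.eval add ρ) (fun _ => rfl) (k + 1) (.var 0)
  have ht_var : ∀ n, t ≠ .var n := by
    intro n
    simp only [t, iterate_succ_apply']
    nofun
  have ht_occ : ((AddTerm.add · (.var 1))^[k + 1] (.var 0)).Occurs 0 :=
    Iterate.rec _ (f := (AddTerm.add · (.var 1))) (show (AddTerm.var 0).Occurs 0 from rfl)
      (fun _ h => Or.inl h) (k + 1)
  rw [← ht_eval]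
  exact hT.acyclic t ht_var ρ (fun n => by dsimp only [ρ]; split_ifs <;> assumption) 0 ht_occ

theorem add_right_ne_self (hT : TreeLike zero S add) {A u : M} (hA : A ∉ standardPart zero S)
    (hu : u ∉ standardPart zero S) : add A u ≠ A :=
  hT.iterate_add_right_ne_self hA hu 0

theorem iterate_succ_ne_self (hT : TreeLike zero S add) (hQ : RobinsonQ zero S add mul) {e : M}
    (he : e ∉ standardPart zero S) (k : ℕ) : S^[k + 1] e ≠ e := by
  intro h
  obtain ⟨t, rfl, ht⟩ := hQ.exists_eq_succ_notMem he
  have htk : S^[k + 1] t = t :=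
    hQ.succ_injective (by rw [← iterate_succ_apply' S (k + 1), iterate_succ_apply, h])
  apply hT.iterate_add_right_ne_self (hT.mul_notMem hQ he ht) he k
  rw [← hQ.mul_iterate, htk]

theorem iterate_injective (hT : TreeLike zero S add) (hQ : RobinsonQ zero S add mul) {e : M}
    (he : e ∉ standardPart zero S) : Injective fun n => S^[n] e :=
  hQ.succ_injective.iterate_apply_injective (hT.iterate_succ_ne_self hQ he)

theorem add_numeral_ne_add (hT : TreeLike zero S add) (hQ : RobinsonQ zero S add mul) {x w : M}
    (hx : x ∉ standardPart zero S) (hw : w ∉ standardPart zero S) (n : ℕ) :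
    add x (S^[n] zero) ≠ add x w := by
  intro h
  rw [hQ.add_numeral] at h
  obtain ⟨w₀, hw₀, hx₀⟩ := hQ.exists_add_eq_of_add_eq_iterate hw n h.symm
  exact hT.add_right_ne_self hx hw₀ hx₀

theorem add_left_cancel (hT : TreeLike zero S add) (hQ : RobinsonQ zero S add mul) {x y w : M}
    (hxy : add x y ∉ standardPart zero S) (h : add x y = add x w) : y = w := by
  have hxw : add x w ∉ standardPart zero S := h ▸ hxy
  rw [hT.add_mem_iff hQ] at hxy hxw
  by_cases hx : x ∈ standardPart zero S
  · have hy : y ∉ standardPart zero S := fun hy => hxy ⟨hx, hy⟩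
    have hw : w ∉ standardPart zero S := fun hw => hxw ⟨hx, hw⟩
    obtain ⟨a, rfl⟩ := hx
    rw [hT.numeral_add hQ hy, hT.numeral_add hQ hw] at h
    exact hQ.succ_injective.iterate a h
  by_cases hy : y ∈ standardPart zero S <;> by_cases hw : w ∈ standardPart zero S
  · obtain ⟨b, rfl⟩ := hy
    obtain ⟨d, rfl⟩ := hw
    rw [hQ.add_numeral, hQ.add_numeral] at h
    rw [hT.iterate_injective hQ hx h]
  · obtain ⟨b, rfl⟩ := hy
    exact absurd h (hT.add_numeral_ne_add hQ hx hw b)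
  · obtain ⟨d, rfl⟩ := hw
    exact absurd h.symm (hT.add_numeral_ne_add hQ hx hy d)
  · exact (hT.add_inj x y x w hx hy hx hw h).2

theorem eq_of_mul_succ_eq (hT : TreeLike zero S add) (hQ : RobinsonQ zero S add mul)
    {u v b c : M} (hu : u ∉ standardPart zero S) (hv : v ∉ standardPart zero S)
    (hb : b ∉ standardPart zero S) (hc : c ∉ standardPart zero S)
    (h : mul u (S b) = mul v (S c)) : u = v ∧ mul u b = mul v c := by
  rw [hQ.mul_succ, hQ.mul_succ] at h
  exact (hT.add_inj _ _ _ _ (hT.mul_notMem hQ hu hb) hu (hT.mul_notMem hQ hv hc) hv h).symm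

theorem mul_self_inj (hT : TreeLike zero S add) (hQ : RobinsonQ zero S add mul) {u v : M}
    (hu : u ∉ standardPart zero S) (hv : v ∉ standardPart zero S) (h : mul u u = mul v v) :
    u = v := by
  obtain ⟨t, rfl, ht⟩ := hQ.exists_eq_succ_notMem hu
  obtain ⟨s, rfl, hs⟩ := hQ.exists_eq_succ_notMem hv
  exact (hT.eq_of_mul_succ_eq hQ hu hv ht hs h).1

theorem succ_eq_of_mul_succ_self_eq (hT : TreeLike zero S add) (hQ : RobinsonQ zero S add mul)
    {t s : M} (ht : t ∉ standardPart zero S) (hs : s ∉ standardPart zero S)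
    (h : mul (S t) t = mul (S s) s) : S t = S s := by
  obtain ⟨t', rfl, ht'⟩ := hQ.exists_eq_succ_notMem ht
  obtain ⟨s', rfl, hs'⟩ := hQ.exists_eq_succ_notMem hs
  exact (hT.eq_of_mul_succ_eq hQ (hQ.succ_notMem ht) (hQ.succ_notMem hs) ht' hs' h).1

theorem mul_succ_self_ne_mul_self (hT : TreeLike zero S add) (hQ : RobinsonQ zero S add mul)
    {t v : M} (ht : t ∉ standardPart zero S) (hv : v ∉ standardPart zero S) :
    mul (S t) t ≠ mul v v := by
  intro h
  have hu := hQ.succ_notMem ht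
  obtain ⟨t', rfl, ht'⟩ := hQ.exists_eq_succ_notMem ht
  obtain ⟨s, rfl, hs⟩ := hQ.exists_eq_succ_notMem hv
  obtain ⟨huv, h'⟩ := hT.eq_of_mul_succ_eq hQ hu hv ht' hs h
  rw [← hQ.succ_injective huv, hQ.mul_succ] at h'
  exact hT.add_right_ne_self (hT.mul_notMem hQ hu ht') hu h'.symm

theorem add_eq_of_pairing_eq (hT : TreeLike zero S add) (hQ : RobinsonQ zero S add mul)
    {x y z w : M} (hu : add x y ∉ standardPart zero S) (hv : add z w ∉ standardPart zero S)
    (h : pairing add mul x y = pairing add mul z w) : add x y = add z w := by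
  obtain ⟨t, ht, htN⟩ := hQ.exists_eq_succ_notMem hu
  obtain ⟨s, hs, hsN⟩ := hQ.exists_eq_succ_notMem hv
  have hSt := hQ.succ_notMem htN
  have hSs := hQ.succ_notMem hsN
  have hut := hT.mul_notMem hQ hSt htN
  have hvs := hT.mul_notMem hQ hSs hsN
  have huu := hT.mul_notMem hQ hu hu
  have hvv := hT.mul_notMem hQ hv hv
  by_cases hx : x ∈ standardPart zero S <;> by_cases hz : z ∈ standardPart zero S
  · obtain ⟨a, rfl⟩ := hx
    obtain ⟨c, rfl⟩ := hz
    rw [hQ.pairing_numeral_left a ht, hQ.pairing_numeral_left c hs] at h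
    rw [ht, hs]
    exact hT.succ_eq_of_mul_succ_self_eq hQ htN hsN
      (hT.add_inj _ _ _ _ hut (hQ.iterate_notMem hSt a) hvs (hQ.iterate_notMem hSs c) h).1
  · obtain ⟨a, rfl⟩ := hx
    rw [hQ.pairing_numeral_left a ht] at h
    exact absurd (hT.add_inj _ _ _ _ hut (hQ.iterate_notMem hSt a) hvv hz h).1
      (hT.mul_succ_self_ne_mul_self hQ htN hv)
  · obtain ⟨c, rfl⟩ := hz
    rw [hQ.pairing_numeral_left c hs] at h
    exact absurd (hT.add_inj _ _ _ _ hvs (hQ.iterate_notMem hSs c) huu hx h.symm).1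
      (hT.mul_succ_self_ne_mul_self hQ hsN hu)
  · exact hT.mul_self_inj hQ hu hv (hT.add_inj _ _ _ _ huu hx hvv hz h).1

theorem pairing_inj_of_notMem (hT : TreeLike zero S add) (hQ : RobinsonQ zero S add mul)
    {x y z w : M} (hxy : ¬(x ∈ standardPart zero S ∧ y ∈ standardPart zero S))
    (h : pairing add mul x y = pairing add mul z w) : x = z ∧ y = w := by
  have hP : pairing add mul x y ∉ standardPart zero S := mt (hT.pairing_mem_iff hQ).1 hxy
  have hu : add x y ∉ standardPart zero S := mt (hT.add_mem_iff hQ).1 hxy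
  have hv : add z w ∉ standardPart zero S := fun hv =>
    hP (h ▸ (hT.pairing_mem_iff hQ).2 ((hT.add_mem_iff hQ).1 hv))
  have huv := hT.add_eq_of_pairing_eq hQ hu hv h
  have hxz : x = z := by
    rw [pairing, pairing, ← huv] at h
    exact hT.add_left_cancel hQ hP h
  subst hxz
  exact ⟨rfl, hT.add_left_cancel hQ hu huv⟩

end TreeLike

end

/-- A structure (M, 0, S, +, ×) satisfying the axioms of Robinson's Q, with standard
part Nst = {Sⁿ(0) : n ∈ ℕ}, in which (b) + restricted to nonstandard elements is
injective into the nonstandard elements, (c) + is acyclic on nonstandard elements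
(no {+}-term which is not a variable, evaluated at nonstandard elements, equals one
of its arguments), and (d) standard elements commute additively with nonstandard
ones, satisfies the pairing axiom Θ: (x+y)·(x+y) + x = (z+w)·(z+w) + z implies
x = z and y = w. -/
theorem theta_holds_in_tree_models {M : Type} (zero : M) (S : M → M)
    (add mul : M → M → M) (Nst : Set M)
    (hNst : Nst = {x | ∃ n : ℕ, x = S^[n] zero})
    (hQ1 : Function.Injective S)
    (hQ2 : ∀ x, S x ≠ zero)
    (hQ3 : ∀ x, x = zero ∨ ∃ y, x = S y)
    (hQ4 : ∀ x, add x zero = x)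
    (hQ5 : ∀ x y, add x (S y) = S (add x y))
    (hQ6 : ∀ x, mul x zero = zero)
    (hQ7 : ∀ x y, mul x (S y) = add (mul x y) x)
    (hb1 : ∀ a b, a ∉ Nst → b ∉ Nst → add a b ∉ Nst)
    (hb2 : ∀ a b c d, a ∉ Nst → b ∉ Nst → c ∉ Nst → d ∉ Nst →
      add a b = add c d → a = c ∧ b = d)
    (hc : ∀ t : AddTerm, (∀ n, t ≠ .var n) → ∀ ρ : ℕ → M, (∀ n, ρ n ∉ Nst) →
      ∀ i, t.Occurs i → t.eval add ρ ≠ ρ i)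
    (hd : ∀ m w, m ∈ Nst → w ∉ Nst → add m w = add w m) :
    ∀ x y z w : M,
      add (mul (add x y) (add x y)) x = add (mul (add z w) (add z w)) z →
      x = z ∧ y = w := by
  intro x y z w (h : pairing add mul x y = pairing add mul z w)
  subst hNst
  have hQ : RobinsonQ zero S add mul := ⟨hQ1, hQ2, hQ3, hQ4, hQ5, hQ6, hQ7⟩
  have hT : TreeLike zero S add := ⟨hb1, hb2, hc, hd⟩
  by_cases hxy : x ∈ standardPart zero S ∧ y ∈ standardPart zero S
  · have hzw := (hT.pairing_mem_iff hQ).1 (h ▸ (hT.pairing_mem_iff hQ).2 hxy)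
    exact hQ.pairing_inj_of_mem hxy.1 hxy.2 hzw.1 hzw.2 h
  · exact hT.pairing_inj_of_notMem hQ hxy h
end

section
/- Let M be a model of Robinson's Q with standard part ℕ, such that for every {+}-term t(x⃗) that is not a variable and every tuple w⃗ of nonstandard elements, t(w⃗) ≠ wᵢ for each component. Then M satisfies Sᵏ(x) ≠ x for every element x and every positive integer k. -/
/-- Iterated addition of `a` to `c`. -/
def iterAdd {M : Type} (f : M → M → M) (c a : M) : ℕ → M
  | 0 => c
  | n + 1 => f (iterAdd f c a n) a

/-- The term x₀ + x₁ + ⋯ + x₁ (n copies of x₁). -/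
def tTerm : ℕ → AddTerm
  | 0 => .var 0
  | n + 1 => .add (tTerm n) (.var 1)

lemma tTerm_eval {M : Type} (f : M → M → M) (ρ : ℕ → M) :
    ∀ n, (tTerm n).eval f ρ = iterAdd f (ρ 0) (ρ 1) n
  | 0 => rfl
  | n + 1 => by
    simp only [tTerm, AddTerm.eval, iterAdd, tTerm_eval f ρ n]

lemma tTerm_occurs : ∀ n, (tTerm n).Occurs 0
  | 0 => rfl
  | n + 1 => Or.inl (tTerm_occurs n)

lemma tTerm_ne_var (n m : ℕ) : tTerm (n + 1) ≠ .var m := fun h =>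
  AddTerm.noConfusion h

/-- In a model (M, 0, S, +, ×) of Robinson's Q with standard part
Nst = {Sⁿ(0) : n ∈ ℕ}, such that no {+}-term which is not a variable, evaluated at
nonstandard elements, equals one of its arguments, we have Sᵏ(x) ≠ x for every x
and every positive k. -/
theorem no_succ_cycles {M : Type} (zero : M) (S : M → M)
    (add mul : M → M → M) (Nst : Set M)
    (hNst : Nst = {x | ∃ n : ℕ, x = S^[n] zero})
    (hQ1 : Function.Injective S)
    (hQ2 : ∀ x, S x ≠ zero)
    (hQ3 : ∀ x, x = zero ∨ ∃ y, x = S y)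
    (hQ4 : ∀ x, add x zero = x)
    (hQ5 : ∀ x y, add x (S y) = S (add x y))
    (hQ6 : ∀ x, mul x zero = zero)
    (hQ7 : ∀ x y, mul x (S y) = add (mul x y) x)
    (hc : ∀ t : AddTerm, (∀ n, t ≠ .var n) → ∀ ρ : ℕ → M, (∀ n, ρ n ∉ Nst) →
      ∀ i, t.Occurs i → t.eval add ρ ≠ ρ i) :
    ∀ (x : M) (k : ℕ), 0 < k → S^[k] x ≠ x := by
  intro x k hk hfix
  obtain ⟨k', rfl⟩ := Nat.exists_eq_succ_of_ne_zero hk.ne'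
  by_cases hx : x ∈ Nst
  · -- standard case
    rw [hNst] at hx
    obtain ⟨n, rfl⟩ := hx
    have h1 : S^[n] (S^[k' + 1] zero) = S^[n] zero := by
      rw [← Function.iterate_add_apply, Nat.add_comm, Function.iterate_add_apply]
      exact hfix
    have h2 : S^[k' + 1] zero = zero := Function.Injective.iterate hQ1 n h1
    rw [Function.iterate_succ_apply'] at h2
    exact hQ2 _ h2
  · -- nonstandard case
    -- key lemma: if add u a is standard then a is standard
    have key : ∀ n : ℕ, ∀ u a : M, add u a = S^[n] zero → ∃ m, a = S^[m] zero := by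
      intro n
      induction n with
      | zero =>
        intro u a h
        rcases hQ3 a with rfl | ⟨b, rfl⟩
        · exact ⟨0, rfl⟩
        · rw [hQ5] at h
          exact absurd h (hQ2 _)
      | succ n ih =>
        intro u a h
        rcases hQ3 a with rfl | ⟨b, rfl⟩
        · exact ⟨0, rfl⟩
        · rw [hQ5, Function.iterate_succ_apply'] at h
          obtain ⟨m, rfl⟩ := ih u b (hQ1 h)
          exact ⟨m + 1, (Function.iterate_succ_apply' S m zero).symm⟩
    -- multiplication unfolds to iterated addition
    have mul_iter : ∀ n : ℕ, ∀ b : M, mul x (S^[n] b) = iterAdd add (mul x b) x n := by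
      intro n
      induction n with
      | zero => intro b; rfl
      | succ n ih =>
        intro b
        rw [Function.iterate_succ_apply', hQ7, ih]
        rfl
    set c := mul x x with hcdef
    have hc1 : c = iterAdd add c x (k' + 1) := by
      have := mul_iter (k' + 1) x
      rw [hfix] at this
      exact this
    -- c is nonstandard
    have hcns : c ∉ Nst := by
      intro hcin
      rw [hNst] at hcin
      obtain ⟨n, hn⟩ := hcin
      have : add (iterAdd add c x k') x = S^[n] zero := by
        rw [← hn]; exact hc1.symm
      obtain ⟨m, hm⟩ := key n _ _ this
      exact hx (by rw [hNst]; exact ⟨m, hm⟩)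
    -- apply the acyclicity hypothesis
    set ρ : ℕ → M := fun n => if n = 1 then x else c with hρ
    have hρns : ∀ n, ρ n ∉ Nst := by
      intro n
      by_cases h : n = 1 <;> simp [hρ, h, hx, hcns]
    have heval : (tTerm (k' + 1)).eval add ρ = ρ 0 := by
      rw [tTerm_eval]
      have h0 : ρ 0 = c := rfl
      have h1 : ρ 1 = x := rfl
      rw [h0, h1, ← hc1]
    exact hc (tTerm (k' + 1)) (tTerm_ne_var k') ρ hρns 0 (tTerm_occurs _) heval
end

section
/- Let B be a set with an injective acyclic binary operation p : B × B → B. Define A₁ = id and A_{n+1}(w) = p(Aₙ(w), w). Then for all m, n ≥ 2 with m ≠ n, the images of Aₘ and Aₙ are disjoint: there are no w, v ∈ B with Aₙ(w) = Aₘ(v). -/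
/-- Terms built from a single binary operation symbol. -/
inductive PTerm : Type
  | var : ℕ → PTerm
  | app : PTerm → PTerm → PTerm

/-- Evaluation of a term with respect to a binary operation and an assignment. -/
def PTerm.eval {B : Type} (p : B → B → B) (ρ : ℕ → B) : PTerm → B
  | .var n => ρ n
  | .app t s => p (t.eval p ρ) (s.eval p ρ)

/-- The variable i occurs in the term. -/
def PTerm.Occurs (i : ℕ) : PTerm → Prop
  | .var n => i = n
  | .app t s => t.Occurs i ∨ s.Occurs i

/-- Iterated term T k, with T 1 = var 0 and T (k+1) = app (T k) (var 0). -/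
def Tterm : ℕ → PTerm
  | 0 => .var 0
  | 1 => .var 0
  | (k+1) => .app (Tterm k) (.var 0)

/-- Let p be an injective acyclic binary operation on B. If A₁ = id and
A_{n+1}(w) = p(Aₙ(w), w), then for distinct m, n ≥ 2 the images of Aₘ and Aₙ
are disjoint. -/
theorem A_maps_disjoint_images {B : Type} (p : B → B → B)
    (hinj : ∀ a b c d : B, p a b = p c d → a = c ∧ b = d)
    (hacyc : ∀ t : PTerm, (∀ n, t ≠ .var n) → ∀ ρ : ℕ → B, ∀ i, t.Occurs i →
      t.eval p ρ ≠ ρ i)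
    (A : ℕ → B → B)
    (hA1 : ∀ w, A 1 w = w)
    (hAsucc : ∀ n, 1 ≤ n → ∀ w, A (n + 1) w = p (A n w) w) :
    ∀ m n, 2 ≤ m → 2 ≤ n → m ≠ n → ∀ w v : B, A n w ≠ A m v := by
  -- evaluation of Tterm
  have heval : ∀ k, 1 ≤ k → ∀ w : B, A k w = (Tterm k).eval p (fun _ => w) := by
    intro k
    induction k with
    | zero => intro h; omega
    | succ k ih =>
      intro _ w
      rcases Nat.eq_or_lt_of_le (Nat.one_le_iff_ne_zero.mpr (Nat.succ_ne_zero k)) with h | h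
      · have : k = 0 := by omega
        subst this
        simp [Tterm, PTerm.eval, hA1]
      · have hk : 1 ≤ k := by omega
        have hk0 : k ≠ 0 := by omega
        rw [hAsucc k hk w, ih hk w]
        cases k with
        | zero => omega
        | succ j => rfl
  -- A n w ≠ w for n ≥ 2
  have hfix : ∀ n, 2 ≤ n → ∀ w : B, A n w ≠ w := by
    intro n hn w h
    have h1 : 1 ≤ n := by omega
    rw [heval n h1 w] at h
    obtain ⟨j, hj⟩ : ∃ j, n = j + 1 ∧ 1 ≤ j := ⟨n - 1, by omega, by omega⟩
    have hnv : ∀ i, Tterm n ≠ .var i := by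
      intro i
      rcases hj with ⟨rfl, hj1⟩
      cases j with
      | zero => omega
      | succ i => intro hc; simp [Tterm] at hc
    have hocc : (Tterm n).Occurs 0 := by
      rcases hj with ⟨rfl, hj1⟩
      cases j with
      | zero => omega
      | succ i => exact Or.inr rfl
    exact hacyc (Tterm n) hnv (fun _ => w) 0 hocc h
  -- same-argument lemma: for 1 ≤ m < n, A n w ≠ A m w
  have hsame : ∀ m, 1 ≤ m → ∀ n, m < n → ∀ w : B, A n w ≠ A m w := by
    intro m hm
    induction m with
    | zero => omega
    | succ k ih =>
      intro n hn w h
      cases Nat.eq_zero_or_pos k with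
      | inl hk0 =>
        subst hk0
        rw [hA1 w] at h
        exact hfix n (by omega) w h
      | inr hk =>
        obtain ⟨n', rfl⟩ : ∃ n', n = n' + 1 := ⟨n - 1, by omega⟩
        rw [hAsucc n' (by omega) w, hAsucc k hk w] at h
        exact ih hk n' (by omega) w (hinj _ _ _ _ h).1
  -- main
  have main : ∀ m n, 2 ≤ m → 2 ≤ n → m < n → ∀ w v : B, A n w ≠ A m v := by
    intro m n hm hn hmn w v h
    obtain ⟨n', rfl⟩ : ∃ n', n = n' + 1 := ⟨n - 1, by omega⟩
    obtain ⟨m', rfl⟩ : ∃ m', m = m' + 1 := ⟨m - 1, by omega⟩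
    rw [hAsucc n' (by omega) w, hAsucc m' (by omega) v] at h
    obtain ⟨h1, h2⟩ := hinj _ _ _ _ h
    subst h2
    exact hsame m' (by omega) n' (by omega) w h1
  intro m n hm hn hne w v h
  rcases Nat.lt_or_ge m n with hlt | hge
  · exact main m n hm hn hlt w v h
  · exact main n m hn hm (by omega) v w h.symm
end

section
/- Let B be a set with an injective binary operation p that is acyclic (in particular p(x,y) ≠ y for all x, y). Suppose R : ℤ → (B → B) is a family of maps satisfying R_m(w) = p(R_{m−1}(w), w) for all m ∈ ℤ and w ∈ B, and each R_m is injective. Then for distinct m, m′ ∈ ℤ, the images of R_m and R_{m′} are disjoint. -/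
/-- Left-iterated terms: `termL k = p (p (... p (x0, x1) ...), x1)`. -/
def termL : ℕ → PTerm
  | 0 => .var 0
  | k + 1 => .app (termL k) (.var 1)

lemma termL_occurs (k : ℕ) : (termL k).Occurs 0 := by
  induction k with
  | zero => rfl
  | succ j ih => exact Or.inl ih

lemma aux_lt {B : Type} (p : B → B → B)
    (hinj : ∀ a b c d : B, p a b = p c d → a = c ∧ b = d)
    (hacyc : ∀ t : PTerm, (∀ n, t ≠ .var n) → ∀ ρ : ℕ → B, ∀ i, t.Occurs i →
      t.eval p ρ ≠ ρ i)
    (R : ℤ → B → B)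
    (hR : ∀ (m : ℤ) (w : B), R m w = p (R (m - 1) w) w)
    (m m' : ℤ) (hlt : m < m') (w v : B) : R m w ≠ R m' v := by
  intro h
  set ρ : ℕ → B := fun n => if n = 0 then R m v else v with hρ
  have hval : ∀ k : ℕ, R (m + k) v = (termL k).eval p ρ := by
    intro k
    induction k with
    | zero => simp [termL, PTerm.eval, hρ]
    | succ j ih =>
      have : (m + (j + 1 : ℕ)) = (m + j) + 1 := by push_cast; ring
      rw [this, hR]
      simp only [add_sub_cancel_right, termL, PTerm.eval, ih, hρ]
      norm_num
  obtain ⟨j, hj⟩ : ∃ j : ℕ, m' = m + (j + 1 : ℕ) := by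
    refine ⟨(m' - m - 1).toNat, ?_⟩
    have h1 : (1 : ℤ) ≤ m' - m := by omega
    push_cast [Int.toNat_of_nonneg (by omega : (0:ℤ) ≤ m' - m - 1)]
    ring
  rw [hj, hval] at h
  have hev : (termL (j+1)).eval p ρ = p ((termL j).eval p ρ) v := by
    simp [termL, PTerm.eval, hρ]
  have h2 : p (R (m - 1) w) w = p ((termL j).eval p ρ) v := by
    rw [← hR, h, hev]
  have hwv : w = v := (hinj _ _ _ _ h2).2
  subst hwv
  have hnv : ∀ n, termL (j + 1) ≠ .var n := by intro n hcontra; simp [termL] at hcontra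
  have hfin : (termL (j+1)).eval p ρ = ρ 0 := by rw [← h]; simp [hρ]
  exact hacyc (termL (j+1)) hnv ρ 0 (termL_occurs (j+1)) hfin

/-- Let p be an injective binary operation on B with p(x,y) ≠ y, and acyclic.
If R : ℤ → (B → B) satisfies R_m(w) = p(R_{m−1}(w), w) and each R_m is injective,
then for distinct m, m′ the images of R_m and R_{m′} are disjoint. -/
theorem R_maps_disjoint_images {B : Type} (p : B → B → B)
    (hinj : ∀ a b c d : B, p a b = p c d → a = c ∧ b = d)
    (hne : ∀ x y : B, p x y ≠ y)
    (hacyc : ∀ t : PTerm, (∀ n, t ≠ .var n) → ∀ ρ : ℕ → B, ∀ i, t.Occurs i →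
      t.eval p ρ ≠ ρ i)
    (R : ℤ → B → B)
    (hR : ∀ (m : ℤ) (w : B), R m w = p (R (m - 1) w) w)
    (hRinj : ∀ m : ℤ, Function.Injective (R m)) :
    ∀ m m' : ℤ, m ≠ m' → ∀ w v : B, R m w ≠ R m' v := by
  intro m m' hmm w v h
  rcases lt_or_gt_of_ne hmm with hlt | hgt
  · exact aux_lt p hinj hacyc R hR m m' hlt w v h
  · exact aux_lt p hinj hacyc R hR m' m hgt v w h.symm
end

section
/- Let M = ℕ ⊔ T where T is the inductive type of binary trees with leaves d(n,m) (n ∈ ℕ, m ∈ ℤ). Define S on M to be the usual successor on ℕ and the tree successor on T (shifting the rightmost leaf label up). Define addition by: a + b = usual sum if a,b ∈ ℕ; a + b = pair a b if a,b ∈ T; n + t = Sⁿ(t) and t + n = Sⁿ(t) for n ∈ ℕ, t ∈ T. Then this addition satisfies x + 0 = x and x + S(y) = S(x + y) for all x, y ∈ M. -/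
/-- Finite full binary trees over generators d(n,m), n ∈ ℕ, m ∈ ℤ. -/
inductive Tree' : Type
  | d : ℕ → ℤ → Tree'
  | pair : Tree' → Tree' → Tree'

/-- The tree successor: shifts the ℤ-index of the rightmost leaf up by one. -/
def Tree'.S : Tree' → Tree'
  | .d n m => .d n (m + 1)
  | .pair u v => .pair u v.S

/-- The successor on M = ℕ ⊔ T. -/
def SM : ℕ ⊕ Tree' → ℕ ⊕ Tree'
  | .inl n => .inl (n + 1)
  | .inr t => .inr t.S

/-- Addition on M = ℕ ⊔ T: usual sum on ℕ, pairing on T, and n + t = t + n = Sⁿ(t)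
for mixed arguments. -/
def addM : ℕ ⊕ Tree' → ℕ ⊕ Tree' → ℕ ⊕ Tree'
  | .inl a, .inl b => .inl (a + b)
  | .inr a, .inr b => .inr (.pair a b)
  | .inl n, .inr t => .inr (Tree'.S^[n] t)
  | .inr t, .inl n => .inr (Tree'.S^[n] t)

/-- The addition on M = ℕ ⊔ T satisfies Robinson's axioms Q4 and Q5:
x + 0 = x and x + S(y) = S(x + y). -/
theorem addM_Q4_Q5 :
    (∀ x : ℕ ⊕ Tree', addM x (Sum.inl 0) = x) ∧
    (∀ x y : ℕ ⊕ Tree', addM x (SM y) = SM (addM x y)) := by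
  constructor
  · rintro (a | t) <;> simp [addM, SM, Function.iterate_zero]
  · rintro (a | t) (b | u)
    · rfl
    · simp only [addM, SM]
      rw [← Function.iterate_succ_apply, Function.iterate_succ_apply']
    · simp [addM, SM, Function.iterate_succ_apply']
    · simp [addM, SM, Tree'.S]
end

section
/- Let M be a first-order structure in a finite language L and suppose that: (a) there is a formula E(z, y, u⃗) of quantifier depth N (with unnested atomic formulas) and elements p⃗ of M such that for every n and all x₀,…,xₙ ∈ M there exists y with ∀z (E(z, y, p⃗) ↔ ⋁ᵢ z = xᵢ); and (b) there is a finite set A ⊆ M such that for every w ∈ M there exist a ∈ A and b ∉ A with (M, w, a) ≡_N (M, w, b). Then we reach a contradiction; i.e., (a) and (b) cannot both hold. -/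
open FirstOrder FirstOrder.Language

/-- The quantifier depth of a bounded formula. -/
def qdepth {L : Language} {α : Type*} : ∀ {n : ℕ}, L.BoundedFormula α n → ℕ
  | _, .falsum => 0
  | _, .equal _ _ => 0
  | _, .rel _ _ => 0
  | _, .imp f g => max (qdepth f) (qdepth g)
  | _, .all f => qdepth f + 1

lemma qdepth_relabel {L : Language} {α β : Type*} {n : ℕ} (g : α → β ⊕ (Fin n)) :
    ∀ {k : ℕ} (φ : L.BoundedFormula α k), qdepth (φ.relabel g) = qdepth φ := by
  intro k φ
  induction φ with
  | falsum => rfl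
  | equal _ _ => rfl
  | rel _ _ => rfl
  | imp f₁ f₂ ih1 ih2 =>
      rw [BoundedFormula.relabel_imp]
      simp only [qdepth, ih1, ih2]
  | all f ih =>
      rw [BoundedFormula.relabel_all]
      simp only [qdepth, ih]

/-- Suppose M is a nonempty L-structure, E(z, y, u⃗) is a formula of quantifier depth
at most N and p⃗ a tuple of parameters such that every finite tuple x₀, …, xₙ of
elements of M has a "set code" y with ∀z (E(z, y, p⃗) ↔ ⋁ᵢ z = xᵢ); and suppose A is
a finite subset of M such that for every w there are a ∈ A and b ∉ A with
(M, p⃗, w, a) and (M, p⃗, w, b) agreeing on all formulas of quantifier depth ≤ N.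
Then we have a contradiction. -/
theorem no_finite_set_coding {L : Language} (M : Type) [Nonempty M] [L.Structure M]
    (k N : ℕ) (E : L.Formula (Fin k ⊕ Fin 2)) (p : Fin k → M)
    (hE : qdepth E ≤ N)
    (ha : ∀ (n : ℕ) (x : Fin (n + 1) → M), ∃ y : M, ∀ z : M,
      (E.Realize (Sum.elim p ![z, y]) ↔ ∃ i, z = x i))
    (A : Finset M)
    (hb : ∀ w : M, ∃ a ∈ A, ∃ b : M, b ∉ A ∧
      ∀ φ : L.Formula (Fin k ⊕ Fin 2), qdepth φ ≤ N →
        (φ.Realize (Sum.elim p ![w, a]) ↔ φ.Realize (Sum.elim p ![w, b]))) :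
    False := by
  -- A is nonempty
  obtain ⟨a₀, ha₀, _⟩ := hb (Classical.arbitrary M)
  have hAne : A.Nonempty := ⟨a₀, ha₀⟩
  have hcard : A.card - 1 + 1 = A.card := Nat.succ_pred_eq_of_pos (Finset.card_pos.mpr hAne)
  set n := A.card - 1 with hn
  -- enumerate A
  let x : Fin (n + 1) → M := fun i => (A.equivFin.symm (Fin.cast hcard i) : M)
  have hx : ∀ z : M, (∃ i, z = x i) ↔ z ∈ A := by
    intro z
    constructor
    · rintro ⟨i, rfl⟩
      exact (A.equivFin.symm (Fin.cast hcard i)).2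
    · intro hz
      refine ⟨Fin.cast hcard.symm (A.equivFin ⟨z, hz⟩), ?_⟩
      simp [x]
  obtain ⟨y, hy⟩ := ha n x
  have hy' : ∀ z : M, E.Realize (Sum.elim p ![z, y]) ↔ z ∈ A := fun z => (hy z).trans (hx z)
  -- the swapped formula
  let swap : (Fin k ⊕ Fin 2) → (Fin k ⊕ Fin 2) ⊕ (Fin 0) :=
    Sum.elim (fun i => Sum.inl (Sum.inl i)) (fun j => Sum.inl (Sum.inr (![1, 0] j)))
  obtain ⟨a, haA, b, hbA, hab⟩ := hb y
  have hswap : ∀ c : M,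
      (Formula.relabel (Sum.elim Sum.inl (fun j : Fin 2 => Sum.inr (![1, 0] j)) :
        (Fin k ⊕ Fin 2) → (Fin k ⊕ Fin 2)) E).Realize (Sum.elim p ![y, c]) ↔
      E.Realize (Sum.elim p ![c, y]) := by
    intro c
    rw [Formula.realize_relabel]
    apply iff_of_eq
    congr 1
    funext v
    rcases v with i | j
    · rfl
    · fin_cases j <;> rfl
  have hdepth : qdepth (Formula.relabel
      (Sum.elim Sum.inl (fun j : Fin 2 => Sum.inr (![1, 0] j)) :
        (Fin k ⊕ Fin 2) → (Fin k ⊕ Fin 2)) E) ≤ N := by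
    rw [Formula.relabel, qdepth_relabel]
    exact hE
  have := (hab _ hdepth)
  rw [hswap a, hswap b, hy' a, hy' b] at this
  exact hbA (this.mp haA)
end

section
/- Let (T, pair) be the free binary tree algebra over leaves d(n,m), n ∈ ℕ, m ∈ ℤ, with tree-successor S. Define the subtree-generation V(X) of a finite set X ⊆ T as the closure of X under taking immediate components of pairs (i.e., if pair u v ∈ V(X) then u, v ∈ V(X)). Define W(X) = {Sᵐ(w) : m ∈ ℤ, w ∈ V(X)}, and define a relation v ≺ w iff some Sʳ(v) lies in V({w}) ∖ {w}. Then ≺ is irreflexive on T; more strongly, for all w ∈ T and all m ∈ ℤ, ¬(w ≺ Sᵐ(w)). -/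
/-- The tree predecessor: shifts the ℤ-index of the rightmost leaf down by one. -/
def Tree'.P : Tree' → Tree'
  | .d n m => .d n (m - 1)
  | .pair u v => .pair u v.P

/-- Sᵐ for m ∈ ℤ: iterated successor for m ≥ 0, iterated predecessor for m < 0. -/
def Sit : ℤ → Tree' → Tree'
  | Int.ofNat n, t => Tree'.S^[n] t
  | Int.negSucc n, t => Tree'.P^[n + 1] t

/-- `Subt u w` means u belongs to the subtree-closure V({w}) of w, i.e. u is obtained
from w by repeatedly taking immediate components of pairs. -/
inductive Subt : Tree' → Tree' → Prop
  | refl (t : Tree') : Subt t t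
  | left {u w v : Tree'} : Subt u w → Subt u (.pair w v)
  | right {u w v : Tree'} : Subt u v → Subt u (.pair w v)

/-- v ≺ w iff some ℤ-shift Sʳ(v) lies in V({w}) ∖ {w}. -/
def prec (v w : Tree') : Prop := ∃ r : ℤ, Subt (Sit r v) w ∧ Sit r v ≠ w

def Tree'.size : Tree' → ℕ
  | .d _ _ => 1
  | .pair u v => u.size + v.size + 1

lemma size_S (t : Tree') : t.S.size = t.size := by
  induction t with
  | d n m => rfl
  | pair u v ih1 ih2 => simp [Tree'.S, Tree'.size, ih2]

lemma size_P (t : Tree') : t.P.size = t.size := by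
  induction t with
  | d n m => rfl
  | pair u v ih1 ih2 => simp [Tree'.P, Tree'.size, ih2]

lemma size_Sit (r : ℤ) (t : Tree') : (Sit r t).size = t.size := by
  cases r with
  | ofNat n =>
    simp only [Sit]
    induction n with
    | zero => rfl
    | succ k ih => rw [Function.iterate_succ_apply', size_S, ih]
  | negSucc n =>
    simp only [Sit]
    induction (n+1) with
    | zero => rfl
    | succ k ih => rw [Function.iterate_succ_apply', size_P, ih]

lemma size_of_subt {u w : Tree'} (h : Subt u w) : u.size < w.size ∨ u = w := by
  induction h with
  | refl => exact Or.inr rfl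
  | left h ih =>
    left
    rcases ih with h' | rfl <;> simp [Tree'.size] <;> omega
  | right h ih =>
    left
    rcases ih with h' | rfl <;> simp [Tree'.size] <;> omega

/-- The relation ≺ is irreflexive; more strongly, no tree precedes any of its
ℤ-shifts: ¬(w ≺ Sᵐ(w)) for all w and all m ∈ ℤ. -/
theorem prec_irrefl_shift :
    (∀ w : Tree', ¬ prec w w) ∧
    (∀ (w : Tree') (m : ℤ), ¬ prec w (Sit m w)) := by
  have key : ∀ (w : Tree') (m : ℤ), ¬ prec w (Sit m w) := by
    rintro w m ⟨r, hs, hne⟩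
    rcases size_of_subt hs with h | h
    · rw [size_Sit, size_Sit] at h; omega
    · exact hne h
  refine ⟨fun w h => key w 0 ?_, key⟩
  simpa [Sit] using h
end

section
/- Let B be a set with an injective binary operation p and injective maps R_m (m ∈ ℤ), A_n (n ≥ 2) satisfying R_m(w) = p(R_{m−1}(w), w), A₂(w) = p(w, w), A_{n+1}(w) = p(A_n(w), w), such that any two distinct maps among {R_m} ∪ {A_n : n ≥ 2} have disjoint images, and p is acyclic. Then for any injective map F : X → B (X ⊆ B) commuting with p, the R_m, and the A_n on X in the embedding sense, and for any element w, there is at most one r ∈ ℤ such that Sʳ(w) lies in the image of some map in {R_m} ∪ {A_n : n ≥ 2}, where S satisfies S(p(u,v)) = p(u, S(v)) and Sʳ(g) ≠ g for r ≠ 0. That is: if Sʳ(w) = G(u) and Sˢ(w) = H(v) for G, H ∈ {R_m} ∪ {A_n : n ≥ 2}, then r = s. -/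
theorem Function.Commute.perm_zpow {α : Type*} {f : α → α} {e : Equiv.Perm α}
    (h : Function.Commute f e) : ∀ n : ℤ, Function.Commute f ⇑(e ^ n)
  | Int.ofNat n => by
    simpa only [Int.ofNat_eq_natCast, zpow_natCast, Equiv.Perm.coe_pow] using h.iterate_right n
  | Int.negSucc n => by
    have hpow : Function.Commute f ⇑(e ^ (n + 1)) := by
      simpa only [Equiv.Perm.coe_pow] using h.iterate_right (n + 1)
    rw [zpow_negSucc]
    exact hpow.inverses_right (e ^ (n + 1)).right_inv (e ^ (n + 1)).left_inv

section BasicMap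

variable {B : Type} {p : B → B → B}

def IsAcyclic (p : B → B → B) : Prop :=
  ∀ t : PTerm, (∀ n, t ≠ .var n) → ∀ ρ : ℕ → B, ∀ i, t.Occurs i → t.eval p ρ ≠ ρ i

theorem IsAcyclic.ne_left (hacyc : IsAcyclic p) (x y : B) : x ≠ p x y :=
  fun h => hacyc (.app (.var 0) (.var 1)) (fun _ => PTerm.noConfusion) ([x, y].getD · x) 0
    (Or.inl rfl) h.symm

theorem IsAcyclic.ne_right_left (hacyc : IsAcyclic p) (x y z : B) : x ≠ p y (p x z) :=
  fun h => hacyc (.app (.var 0) (.app (.var 1) (.var 2))) (fun _ => PTerm.noConfusion)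
    ([y, x, z].getD · x) 1 (Or.inr (Or.inl rfl)) h.symm

def IsBasicMap (R : ℤ → B → B) (A : ℕ → B → B) (G : B → B) : Prop :=
  (∃ m, G = R m) ∨ (∃ n, 2 ≤ n ∧ G = A n)

variable {R : ℤ → B → B} {A : ℕ → B → B} {G H : B → B}

theorem IsBasicMap.exists_pred (hR : ∀ (m : ℤ) (w : B), R m w = p (R (m - 1) w) w)
    (hA2 : ∀ w, A 2 w = p w w) (hAsucc : ∀ n, 2 ≤ n → ∀ w, A (n + 1) w = p (A n w) w)
    (hG : IsBasicMap R A G) :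
    ∃ G' : B → B, (G' = id ∨ IsBasicMap R A G') ∧ ∀ x, G x = p (G' x) x := by
  rcases hG with ⟨m, rfl⟩ | ⟨n, hn, rfl⟩
  · exact ⟨R (m - 1), .inr (.inl ⟨_, rfl⟩), hR m⟩
  rcases hn.eq_or_lt with rfl | hlt
  · exact ⟨id, .inl rfl, hA2⟩
  obtain ⟨k, rfl⟩ := Nat.exists_eq_add_of_lt hlt
  exact ⟨A (2 + k), .inr (.inr ⟨_, by omega, rfl⟩), hAsucc _ (by omega)⟩

theorem IsBasicMap.eq_of_apply_eq (hRinj : ∀ m : ℤ, Function.Injective (R m))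
    (hAinj : ∀ n, 2 ≤ n → Function.Injective (A n))
    (hdRR : ∀ m m' : ℤ, m ≠ m' → ∀ u v : B, R m u ≠ R m' v)
    (hdAA : ∀ n n' : ℕ, 2 ≤ n → 2 ≤ n' → n ≠ n' → ∀ u v : B, A n u ≠ A n' v)
    (hdRA : ∀ (m : ℤ) (n : ℕ), 2 ≤ n → ∀ u v : B, R m u ≠ A n v)
    (hG : IsBasicMap R A G) (hH : IsBasicMap R A H) {u v : B} (h : G u = H v) : u = v := by
  rcases hG with ⟨m, rfl⟩ | ⟨n, hn, rfl⟩ <;> rcases hH with ⟨m', rfl⟩ | ⟨n', hn', rfl⟩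
  · obtain rfl : m = m' := by_contra fun hm => hdRR m m' hm u v h
    exact hRinj m h
  · exact absurd h (hdRA m n' hn' u v)
  · exact absurd h.symm (hdRA m' n hn v u)
  · obtain rfl : n = n' := by_contra fun hn'' => hdAA n n' hn hn' hn'' u v h
    exact hAinj n hn h

theorem IsBasicMap.zpow_apply_ne
    (hacyc : IsAcyclic p) (hR : ∀ (m : ℤ) (w : B), R m w = p (R (m - 1) w) w)
    (hA2 : ∀ w, A 2 w = p w w) (hAsucc : ∀ n, 2 ≤ n → ∀ w, A (n + 1) w = p (A n w) w)
    {e : Equiv.Perm B} (hcomm : ∀ a, Function.Commute (p a) e)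
    (hG : IsBasicMap R A G) (k : ℤ) (x : B) : (e ^ k) (G x) ≠ x := by
  obtain ⟨G', hG', hGx⟩ := hG.exists_pred hR hA2 hAsucc
  rw [hGx, ← ((hcomm (G' x)).perm_zpow k).eq]
  rcases hG' with rfl | hG'
  · exact (hacyc.ne_left x _).symm
  obtain ⟨G'', -, hG'x⟩ := hG'.exists_pred hR hA2 hAsucc
  intro h
  exact hacyc.ne_right_left (G' x) (G'' x) ((e ^ k) x)
    ((hG'x x).trans (congrArg (p (G'' x)) h.symm))

end BasicMap

theorem shift_unique_general {B : Type} (p : B → B → B)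
    (hinj : ∀ a b c d : B, p a b = p c d → a = c ∧ b = d)
    (hacyc : ∀ t : PTerm, (∀ n, t ≠ .var n) → ∀ ρ : ℕ → B, ∀ i, t.Occurs i →
      t.eval p ρ ≠ ρ i)
    (R : ℤ → B → B)
    (hR : ∀ (m : ℤ) (w : B), R m w = p (R (m - 1) w) w)
    (hRinj : ∀ m : ℤ, Function.Injective (R m))
    (A : ℕ → B → B)
    (hA2 : ∀ w, A 2 w = p w w)
    (hAsucc : ∀ n, 2 ≤ n → ∀ w, A (n + 1) w = p (A n w) w)
    (hAinj : ∀ n, 2 ≤ n → Function.Injective (A n))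
    (hdRR : ∀ m m' : ℤ, m ≠ m' → ∀ u v : B, R m u ≠ R m' v)
    (hdAA : ∀ n n' : ℕ, 2 ≤ n → 2 ≤ n' → n ≠ n' → ∀ u v : B, A n u ≠ A n' v)
    (hdRA : ∀ (m : ℤ) (n : ℕ), 2 ≤ n → ∀ u v : B, R m u ≠ A n v)
    (e : Equiv.Perm B)
    (hcomm : ∀ u v : B, e (p u v) = p u (e v))
    (hper : ∀ (g : B) (r : ℤ), r ≠ 0 → (e ^ r) g ≠ g) :
    ∀ (r s : ℤ) (w u v : B) (G H : B → B),
      ((∃ m : ℤ, G = R m) ∨ (∃ n : ℕ, 2 ≤ n ∧ G = A n)) →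
      ((∃ m : ℤ, H = R m) ∨ (∃ n : ℕ, 2 ≤ n ∧ H = A n)) →
      (e ^ r) w = G u → (e ^ s) w = H v → r = s := by
  intro r s w u v G H hG hH hGu hHv
  have hcomm' : ∀ a, Function.Commute (p a) e := fun a v => (hcomm a v).symm
  obtain ⟨G', hG', hGu'⟩ := IsBasicMap.exists_pred hR hA2 hAsucc hG
  obtain ⟨H', hH', hHv'⟩ := IsBasicMap.exists_pred hR hA2 hAsucc hH
  have hshift : p (G' u) ((e ^ (s - r)) u) = p (H' v) v :=
    calc p (G' u) ((e ^ (s - r)) u) = (e ^ (s - r)) (G u) := by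
          rw [hGu' u, ((hcomm' _).perm_zpow _).eq]
      _ = (e ^ s) w := by rw [← hGu, ← Equiv.Perm.mul_apply, ← zpow_add, sub_add_cancel]
      _ = p (H' v) v := hHv.trans (hHv' v)
  obtain ⟨hpred, hshift_u⟩ := hinj _ _ _ _ hshift
  have huv : u = v := by
    rcases hG' with rfl | hG' <;> rcases hH' with rfl | hH'
    · exact hpred
    · refine absurd ?_ (hH'.zpow_apply_ne hacyc hR hA2 hAsucc hcomm' (s - r) v)
      rwa [← hpred]
    · refine absurd ?_ (hG'.zpow_apply_ne hacyc hR hA2 hAsucc hcomm' (-(s - r)) u)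
      rw [hpred, id, ← hshift_u, zpow_neg, Equiv.Perm.inv_def, Equiv.symm_apply_apply]
    · exact hG'.eq_of_apply_eq hRinj hAinj hdRR hdAA hdRA hH' hpred
  by_contra hrs
  exact hper u (s - r) (sub_ne_zero.mpr (Ne.symm hrs)) (hshift_u.trans huv.symm)

/-- Uniqueness of the shift: given an injective acyclic pairing p, injective families
R_m (m ∈ ℤ) and A_n (n ≥ 2) with R_m(w) = p(R_{m−1}(w), w), A₂(w) = p(w,w),
A_{n+1}(w) = p(A_n(w), w), pairwise disjoint images, and a bijection S with
S(p(u,v)) = p(u, S(v)) and no periodic points, then: if Sʳ(w) = G(u) and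
Sˢ(w) = H(v) for G, H among the R_m and A_n (n ≥ 2), then r = s. -/
theorem shift_unique {B : Type} (p : B → B → B)
    (hinj : ∀ a b c d : B, p a b = p c d → a = c ∧ b = d)
    (hne : ∀ x y : B, p x y ≠ y)
    (hacyc : ∀ t : PTerm, (∀ n, t ≠ .var n) → ∀ ρ : ℕ → B, ∀ i, t.Occurs i →
      t.eval p ρ ≠ ρ i)
    (R : ℤ → B → B)
    (hR : ∀ (m : ℤ) (w : B), R m w = p (R (m - 1) w) w)
    (hRinj : ∀ m : ℤ, Function.Injective (R m))
    (A : ℕ → B → B)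
    (hA2 : ∀ w, A 2 w = p w w)
    (hAsucc : ∀ n, 2 ≤ n → ∀ w, A (n + 1) w = p (A n w) w)
    (hAinj : ∀ n, 2 ≤ n → Function.Injective (A n))
    (hdRR : ∀ m m' : ℤ, m ≠ m' → ∀ u v : B, R m u ≠ R m' v)
    (hdAA : ∀ n n' : ℕ, 2 ≤ n → 2 ≤ n' → n ≠ n' → ∀ u v : B, A n u ≠ A n' v)
    (hdRA : ∀ (m : ℤ) (n : ℕ), 2 ≤ n → ∀ u v : B, R m u ≠ A n v)
    (e : Equiv.Perm B)
    (hcomm : ∀ u v : B, e (p u v) = p u (e v))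
    (hper : ∀ (g : B) (r : ℤ), r ≠ 0 → (e ^ r) g ≠ g) :
    ∀ (r s : ℤ) (w u v : B) (G H : B → B),
      ((∃ m : ℤ, G = R m) ∨ (∃ n : ℕ, 2 ≤ n ∧ G = A n)) →
      ((∃ m : ℤ, H = R m) ∨ (∃ n : ℕ, 2 ≤ n ∧ H = A n)) →
      (e ^ r) w = G u → (e ^ s) w = H v → r = s :=
  shift_unique_general p hinj hacyc R hR hRinj A hA2 hAsucc hAinj hdRR hdAA hdRA e hcomm hper
end
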